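/- arXiv:1707.08292 — 5 statements merged into one kernel-verified Lean document; each statement's English description precedes it below -/
import Mathlib

section
/- Let A be a hereditary abelian category, X an object of A, and K_{X,m} the bounded acyclic complex with X in degrees m-1 and m connected by the identity map. Then for any bounded complex M over A and any p ≥ 2, Ext^p(K_{X,m}, M) = 0 in the category of bounded complexes C^b(A). -/
open CategoryTheory CategoryTheory.Limits ZeroObject

universe w w' v u

variable {A : Type u} [Category.{v} A] [Abelian A]

/-- The acyclic complex `K_{X,m}`: `X` in degrees `m-1` and `m`, identity differential. -/
noncomputable def Kc (X : A) (m : ℤ) : CochainComplex A ℤ where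
  X i := if i = m - 1 ∨ i = m then X else 0
  d i j := if h : i = m - 1 ∧ j = m then
      eqToHom (by rw [if_pos (Or.inl h.1), if_pos (Or.inr h.2)]) else 0
  shape i j hij := by
    rw [dif_neg]
    rintro ⟨rfl, rfl⟩
    exact hij (by simp [ComplexShape.up_Rel])
  d_comp_d' i j k _ _ := by
    by_cases h1 : i = m - 1 ∧ j = m
    · obtain ⟨hi, hj⟩ := h1
      rw [dif_pos ⟨hi, hj⟩, dif_neg (fun h2 => by obtain ⟨h2a, h2b⟩ := h2; omega)]
      exact comp_zero
    · rw [dif_neg h1, zero_comp]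

/-- The stalk complex `U_{X,n}` with `X` concentrated in degree `n`. -/
noncomputable def Uc (X : A) (n : ℤ) : CochainComplex A ℤ :=
  (HomologicalComplex.single A (ComplexShape.up ℤ) n).obj X

/-- A complex is bounded. -/
def Bdd (M : CochainComplex A ℤ) : Prop :=
  ∃ a b : ℤ, ∀ i : ℤ, i < a ∨ b < i → IsZero (M.X i)

/-
`K_{X,m}` corepresents evaluation in degree `m - 1` (it is `double (𝟙 X)`), so `X ↦ K_{X,m}` is
left adjoint to `M ↦ M^{m-1}`; both functors are exact, because in each degree `X ↦ K_{X,m}^i` is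
the identity or zero. An adjunction between exact functors descends to the derived categories,
which gives `Ext^p(K_{X,m}, M) ≃ Ext^p_A(X, M^{m-1})`, and the latter vanishes for `p ≥ 2`.
-/

namespace CategoryTheory.Adjunction

section

variable {C D : Type*} [Category* C] [Category* D] [Preadditive C] [Preadditive D]
  {F : C ⥤ D} {G : D ⥤ C} [F.PreservesZeroMorphisms] [G.PreservesZeroMorphisms]

def mapHomologicalComplex (adj : F ⊣ G) {ι : Type*} (c : ComplexShape ι) :
    F.mapHomologicalComplex c ⊣ G.mapHomologicalComplex c where
  unit.app K :=
    { f i := adj.unit.app (K.X i)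
      comm' i j _ := adj.unit_naturality (K.d i j) }
  unit.naturality _ _ _ := by ext; exact adj.unit.naturality _
  counit.app K :=
    { f i := adj.counit.app (K.X i)
      comm' i j _ := (adj.counit_naturality (K.d i j)).symm }
  counit.naturality _ _ _ := by ext; exact adj.counit.naturality _
  left_triangle_components K := by ext; exact adj.left_triangle_components _
  right_triangle_components K := by ext; exact adj.right_triangle_components _

end

section

open _root_.DerivedCategory

variable {C D : Type*} [Category* C] [Category* D] [Abelian C] [Abelian D]
  {L : C ⥤ D} {R : D ⥤ C} [L.Additive] [R.Additive]
  [PreservesFiniteLimits L] [PreservesFiniteColimits L]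
  [PreservesFiniteLimits R] [PreservesFiniteColimits R]

noncomputable def mapDerivedCategory (adj : L ⊣ R) [HasDerivedCategory C]
    [HasDerivedCategory D] : L.mapDerivedCategory ⊣ R.mapDerivedCategory :=
  letI : CatCommSq (L.mapHomologicalComplex (ComplexShape.up ℤ)) Q Q L.mapDerivedCategory :=
    ⟨L.mapDerivedCategoryFactors.symm⟩
  letI : CatCommSq (R.mapHomologicalComplex (ComplexShape.up ℤ)) Q Q R.mapDerivedCategory :=
    ⟨R.mapDerivedCategoryFactors.symm⟩
  (adj.mapHomologicalComplex _).localization Q (HomologicalComplex.quasiIso _ _)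
    Q (HomologicalComplex.quasiIso _ _) _ _

noncomputable def extEquiv (adj : L ⊣ R) [HasExt.{w} C] [HasExt.{w'} D] (X : C) (Y : D)
    (n : ℕ) : Abelian.Ext.{w'} (L.obj X) Y n ≃ Abelian.Ext.{w} X (R.obj Y) n :=
  letI := HasDerivedCategory.standard C
  letI := HasDerivedCategory.standard D
  Abelian.Ext.homEquiv.trans <|
    ((L.mapDerivedCategorySingleFunctor 0).app X).symm.homFromEquiv.trans <|
    (adj.mapDerivedCategory.homEquiv _ _).trans <|
    ((R.mapDerivedCategory.commShiftIso (n : ℤ)).app _ ≪≫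
      (shiftFunctor _ (n : ℤ)).mapIso ((R.mapDerivedCategorySingleFunctor 0).app Y)).homToEquiv.trans
    Abelian.Ext.homEquiv.symm

end

end CategoryTheory.Adjunction

namespace HomologicalComplex

variable {C D ι : Type*} [Category* C] [Category* D] [HasZeroMorphisms C] {c : ComplexShape ι}

lemma preservesFiniteLimits_of_eval [HasFiniteLimits C] (G : D ⥤ HomologicalComplex C c)
    (h : ∀ i, PreservesFiniteLimits (G ⋙ eval C c i)) : PreservesFiniteLimits G :=
  ⟨fun _ _ _ => preservesLimitsOfShape_of_eval G fun _ => inferInstance⟩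

lemma preservesFiniteColimits_of_eval [HasFiniteColimits C] (G : D ⥤ HomologicalComplex C c)
    (h : ∀ i, PreservesFiniteColimits (G ⋙ eval C c i)) : PreservesFiniteColimits G :=
  ⟨fun _ _ _ => preservesColimitsOfShape_of_eval G fun _ => inferInstance⟩

end HomologicalComplex

namespace Kc

section

variable (X : A) (m : ℤ)

lemma isZero_X {i : ℤ} (h : ¬(i = m - 1 ∨ i = m)) : IsZero ((Kc X m).X i) := by
  dsimp [Kc]
  rw [if_neg h]
  exact isZero_zero A

noncomputable def XIso {i : ℤ} (h : i = m - 1 ∨ i = m) : (Kc X m).X i ≅ X :=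
  eqToIso (show (Kc X m).X i = X from if_pos h)

lemma d_sub_one_self :
    (Kc X m).d (m - 1) m = (XIso X m (.inl rfl)).hom ≫ (XIso X m (.inr rfl)).inv := by
  rw [XIso, XIso, eqToIso.hom, eqToIso.inv, eqToHom_trans]
  exact dif_pos ⟨rfl, rfl⟩

lemma d_eq_zero {i j : ℤ} (h : ¬(i = m - 1 ∧ j = m)) : (Kc X m).d i j = 0 := dif_neg h

lemma X_eq_double_X (i : ℤ) :
    (Kc X m).X i =
      (HomologicalComplex.double (𝟙 X) (show (ComplexShape.up ℤ).Rel (m - 1) m by simp)).X i := by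
  dsimp [Kc, HomologicalComplex.double]
  split_ifs <;> first | rfl | omega

noncomputable def isoDouble :
    Kc X m ≅ HomologicalComplex.double (𝟙 X) (show (ComplexShape.up ℤ).Rel (m - 1) m by simp) :=
  HomologicalComplex.Hom.isoOfComponents (fun i => eqToIso (X_eq_double_X X m i))
    (by
      rintro i j (hij : i + 1 = j)
      by_cases hi : i = m - 1
      · obtain rfl := hi
        obtain rfl : m = j := by omega
        simp [d_sub_one_self, XIso, HomologicalComplex.double_d _ _ (show m - 1 ≠ m by omega),
          HomologicalComplex.doubleXIso₀, HomologicalComplex.doubleXIso₁, eqToIso]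
        -- the `eqToHom`s of `double` have endpoints only definitionally equal to the displayed
        -- ones, so `simp` cannot merge them and the unification has to happen in `exact`
        exact (eqToHom_trans_assoc _ _ _).trans (eqToHom_trans _ _)
      · rw [d_eq_zero X m (fun h => hi h.1), HomologicalComplex.double_d_eq_zero₀ _ _ _ _ hi,
          comp_zero, zero_comp])

end

variable (m : ℤ)

noncomputable def corepresentableBy (X : A) :
    (HomologicalComplex.eval A (ComplexShape.up ℤ) (m - 1) ⋙ coyoneda.obj (.op X)).CorepresentableBy
      (Kc X m) :=
  (HomologicalComplex.evalCompCoyonedaCorepresentableByDoubleId _ (by omega) X).ofIsoObj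
    (isoDouble X m)

-- reducible, so that `(functor A m).obj X` and `Kc X m` are interchangeable for `simp`
variable (A) in
@[simps]
noncomputable abbrev functor : A ⥤ CochainComplex A ℤ where
  obj X := Kc X m
  map {X Y} f :=
    { f i := if h : i = m - 1 ∨ i = m then
        (XIso X m h).hom ≫ f ≫ (XIso Y m h).inv else 0
      comm' i j _ := by
        by_cases h : i = m - 1 ∧ j = m
        · obtain ⟨rfl, rfl⟩ := h
          simp [d_sub_one_self]
        · rw [d_eq_zero X m h, d_eq_zero Y m h, comp_zero, zero_comp] }
  map_id X := by
    ext i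
    by_cases h : i = m - 1 ∨ i = m
    · simp [dif_pos h]
    · exact (isZero_X X m h).eq_of_src _ _
  map_comp {X Y Z} f g := by
    ext i
    by_cases h : i = m - 1 ∨ i = m
    · simp [dif_pos h]
    · exact (isZero_X X m h).eq_of_src _ _

lemma XIso_inv_comp_functor_map_f {X Y : A} (f : X ⟶ Y) {i : ℤ} (h : i = m - 1 ∨ i = m) :
    (XIso X m h).inv ≫ ((functor A m).map f).f i = f ≫ (XIso Y m h).inv := by
  simp [dif_pos h]

lemma corepresentableBy_homEquiv {X : A} {M : CochainComplex A ℤ} (φ : Kc X m ⟶ M) :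
    (corepresentableBy m X).homEquiv φ = (XIso X m (.inl rfl)).inv ≫ φ.f (m - 1) := by
  change (HomologicalComplex.doubleXIso₀ _ _).inv ≫ ((isoDouble X m).inv ≫ φ).f (m - 1) = _
  simp only [isoDouble, XIso, HomologicalComplex.doubleXIso₀, HomologicalComplex.comp_f,
    HomologicalComplex.Hom.isoOfComponents_inv_f, eqToIso.inv]
  dsimp only [eqToIso]
  exact eqToHom_trans_assoc _ _ _

noncomputable def adjunction :
    functor A m ⊣ HomologicalComplex.eval A (ComplexShape.up ℤ) (m - 1) :=
  Adjunction.mkOfHomEquiv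
    { homEquiv X M := (corepresentableBy m X).homEquiv
      homEquiv_naturality_left_symm f g := by
        obtain ⟨ψ, rfl⟩ := (corepresentableBy m _).homEquiv.surjective g
        rw [Equiv.symm_apply_apply, Equiv.symm_apply_eq, corepresentableBy_homEquiv,
          corepresentableBy_homEquiv, HomologicalComplex.comp_f,
          reassoc_of% XIso_inv_comp_functor_map_f m f]
        -- the two sides agree only after unfolding `HomologicalComplex.eval`
        rfl
      homEquiv_naturality_right f g := (corepresentableBy m _).homEquiv_comp g f }

noncomputable def functorCompEvalIso {i : ℤ} (h : i = m - 1 ∨ i = m) :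
    𝟭 A ≅ functor A m ⋙ HomologicalComplex.eval A _ i :=
  NatIso.ofComponents (fun X => (XIso X m h).symm) fun f =>
    (XIso_inv_comp_functor_map_f m f h).symm

lemma isZero_functor_comp_eval {i : ℤ} (h : ¬(i = m - 1 ∨ i = m)) :
    IsZero (functor A m ⋙ HomologicalComplex.eval A _ i) :=
  Functor.isZero _ fun X => isZero_X X m h

instance : PreservesFiniteLimits (functor A m) :=
  HomologicalComplex.preservesFiniteLimits_of_eval _ fun i =>
    if h : i = m - 1 ∨ i = m then preservesFiniteLimits_of_natIso (functorCompEvalIso m h)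
    else ⟨fun J _ _ => Functor.preservesLimitsOfShape_of_isZero _ (isZero_functor_comp_eval m h) J⟩

instance : PreservesFiniteColimits (functor A m) :=
  HomologicalComplex.preservesFiniteColimits_of_eval _ fun i =>
    if h : i = m - 1 ∨ i = m then preservesFiniteColimits_of_natIso (functorCompEvalIso m h)
    else ⟨fun J _ _ =>
      Functor.preservesColimitsOfShape_of_isZero _ (isZero_functor_comp_eval m h) J⟩

instance : (functor A m).Additive := Functor.additive_of_preserves_binary_products _

end Kc

theorem stmt0_general [HasExt.{w} A] [HasExt.{w'} (CochainComplex A ℤ)]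
    (hered : ∀ (X Y : A) (n : ℕ), 2 ≤ n → Subsingleton (Abelian.Ext X Y n))
    (X : A) (m : ℤ) (M : CochainComplex A ℤ) (p : ℕ) (hp : 2 ≤ p) :
    Subsingleton (Abelian.Ext (Kc X m) M p) :=
  @Equiv.subsingleton _ _ ((Kc.adjunction m).extEquiv X M p) (hered X (M.X (m - 1)) p hp)

theorem stmt0 [HasExt.{w} A] [HasExt.{w'} (CochainComplex A ℤ)]
    (hered : ∀ (X Y : A) (n : ℕ), 2 ≤ n → Subsingleton (Abelian.Ext X Y n))
    (X : A) (m : ℤ) (M : CochainComplex A ℤ) (hM : Bdd M) (p : ℕ) (hp : 2 ≤ p) :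
    Subsingleton (Abelian.Ext (Kc X m) M p) :=
  stmt0_general hered X m M p hp
end

section
/- Let B be an abelian category and 0 → U → V → W → 0 a short exact sequence of bounded cochain complexes over B. Then the following are equivalent: (i) for every i, the induced sequence 0 → Im(d_U^i) → Im(d_V^i) → Im(d_W^i) → 0 is short exact; (ii) for every i, the induced sequence 0 → Ker(d_U^i) → Ker(d_V^i) → Ker(d_W^i) → 0 is short exact; (iii) for every i, the induced sequence 0 → H^i(U) → H^i(V) → H^i(W) → 0 is short exact. -/
/-!
For each `i` the differentials form a morphism `d : S_i ⟶ S_{i+1}` between the short exact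
degreewise rows. Its columns `0 → ker d → S_i → im d → 0` are short exact, so by the nine lemma
the row of kernels (the row of `i`-cycles) is short exact iff the row of images is. Viewing `d`
instead as a morphism from `S_i` to the left exact row of `(i+1)`-cycles, the snake lemma gives an
exact sequence `0 → Z_i U → Z_i V → Z_i W → H_{i+1} U → H_{i+1} V → H_{i+1} W`. Its connecting
map vanishes iff `Z_i V → Z_i W` is epi, iff `H_{i+1} U → H_{i+1} V` is mono; this links (ii) in
degrees `i` and `i + 1` with (iii) in degree `i + 1`.
-/

open CategoryTheory CategoryTheory.Limits ZeroObject

universe w w' v u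

variable {A : Type u} [Category.{v} A] [Abelian A]

/-- A complex is acyclic if it is exact everywhere. -/
def Acyc (K : CochainComplex A ℤ) : Prop := ∀ i : ℤ, K.ExactAt i

namespace CategoryTheory.ShortComplex

variable {C : Type*} [Category C] [Abelian C]

lemma exists_shortExact_mk_iff (S : ShortComplex C) :
    (∃ w, (ShortComplex.mk S.f S.g w).ShortExact) ↔ S.ShortExact :=
  ⟨fun ⟨_, h⟩ => h, fun h => ⟨S.zero, h⟩⟩

namespace SnakeInput

variable (D : SnakeInput C)

lemma δ_eq_zero_iff_epi_L₀_g : D.δ = 0 ↔ Epi D.L₀.g :=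
  D.L₁'_exact.epi_f_iff.symm

lemma δ_eq_zero_iff_mono_L₃_f : D.δ = 0 ↔ Mono D.L₃.f :=
  D.L₂'_exact.mono_g_iff.symm

lemma L₀_shortExact_iff [Mono D.L₁.f] : D.L₀.ShortExact ↔ D.δ = 0 := by
  rw [δ_eq_zero_iff_epi_L₀_g]
  exact ⟨fun h => h.epi_g, fun _ => { exact := D.L₀_exact }⟩

lemma L₃_shortExact_iff [Epi D.L₂.g] : D.L₃.ShortExact ↔ D.δ = 0 := by
  rw [δ_eq_zero_iff_mono_L₃_f]
  exact ⟨fun h => h.mono_f, fun _ => { exact := D.L₃_exact }⟩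

end SnakeInput

lemma shortExact_of_shortExact_map_π (X : ShortComplex (ShortComplex C))
    (h₁ : (X.map π₁).ShortExact) (h₂ : (X.map π₂).ShortExact) (h₃ : (X.map π₃).ShortExact) :
    X.ShortExact := by
  have hf : IsLimit (KernelFork.ofι X.f X.zero) := by
    refine isLimitOfIsLimitπ _ ?_ ?_ ?_ <;> refine (KernelFork.isLimitMapConeEquiv _ _).symm ?_
    exacts [h₁.fIsKernel, h₂.fIsKernel, h₃.fIsKernel]
  have hg : IsColimit (CokernelCofork.ofπ X.g X.zero) := by
    refine isColimitOfIsColimitπ _ ?_ ?_ ?_ <;>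
      refine (CokernelCofork.isColimitMapCoconeEquiv _ _).symm ?_
    exacts [h₁.gIsCokernel, h₂.gIsCokernel, h₃.gIsCokernel]
  have : Mono X.f := mono_of_isLimit_fork hf
  have : Epi X.g := epi_of_isColimit_cofork hg
  exact { exact := exact_of_f_is_kernel _ hf }

/-- A form of the nine lemma; in the snake diagram of `X.f` or of `X.g` one of the outer rows is
zero, so the connecting map vanishes. -/
lemma ShortExact.shortExact_X₁_iff_shortExact_X₃ {X : ShortComplex (ShortComplex C)}
    (hX : X.ShortExact) (hX₂ : X.X₂.ShortExact) : X.X₁.ShortExact ↔ X.X₃.ShortExact := by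
  constructor
  · intro hX₁
    let D : SnakeInput C :=
      { L₀ := 0, L₁ := X.X₁, L₂ := X.X₂, L₃ := X.X₃, v₀₁ := 0, v₁₂ := X.f, v₂₃ := X.g
        w₁₃ := X.zero
        h₀ := KernelFork.IsLimit.ofMonoOfIsZero _ hX.mono_f (isZero_zero _)
        h₃ := hX.gIsCokernel
        L₁_exact := hX₁.exact
        epi_L₁_g := hX₁.epi_g
        L₂_exact := hX₂.exact
        mono_L₂_f := hX₂.mono_f }
    have : Epi D.L₂.g := hX₂.epi_g
    exact D.L₃_shortExact_iff.2 ((π₃.map_isZero (isZero_zero _)).eq_of_src _ _)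
  · intro hX₃
    let D : SnakeInput C :=
      { L₀ := X.X₁, L₁ := X.X₂, L₂ := X.X₃, L₃ := 0, v₀₁ := X.f, v₁₂ := X.g, v₂₃ := 0
        w₀₂ := X.zero
        h₀ := hX.fIsKernel
        h₃ := CokernelCofork.IsColimit.ofEpiOfIsZero _ hX.epi_g (isZero_zero _)
        L₁_exact := hX₂.exact
        epi_L₁_g := hX₂.epi_g
        L₂_exact := hX₃.exact
        mono_L₂_f := hX₃.mono_f }
    have : Mono D.L₁.f := hX₂.mono_f
    exact D.L₀_shortExact_iff.2 ((π₁.map_isZero (isZero_zero _)).eq_of_tgt _ _)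

lemma kernel_ι_comp_factorThruImage {X Y : C} (f : X ⟶ Y) :
    kernel.ι f ≫ factorThruImage f = 0 := by
  rw [← cancel_mono (image.ι f)]
  simp

lemma shortExact_kernel_ι_factorThruImage {X Y : C} (f : X ⟶ Y) :
    (ShortComplex.mk _ _ (kernel_ι_comp_factorThruImage f)).ShortExact where
  exact := exact_of_f_is_kernel _ (isKernelOfComp (image.ι f) f (kernelIsKernel f) _ (image.fac f))

namespace Hom

variable {T₁ T₂ : ShortComplex C} (φ : T₁ ⟶ T₂)

noncomputable def kernels : ShortComplex C :=
  ShortComplex.mk (kernel.map φ.τ₁ φ.τ₂ T₁.f T₂.f φ.comm₁₂)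
    (kernel.map φ.τ₂ φ.τ₃ T₁.g T₂.g φ.comm₂₃) (by ext; simp)

noncomputable def images : ShortComplex C :=
  ShortComplex.mk
    (image.map (f := Arrow.mk φ.τ₁) (g := Arrow.mk φ.τ₂)
      (Arrow.homMk (u := T₁.f) (v := T₂.f) φ.comm₁₂.symm))
    (image.map (f := Arrow.mk φ.τ₂) (g := Arrow.mk φ.τ₃)
      (Arrow.homMk (u := T₁.g) (v := T₂.g) φ.comm₂₃.symm))
    (by
      rw [← cancel_mono (image.ι φ.τ₃), Category.assoc]
      erw [image.map_ι, ← Category.assoc, image.map_ι]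
      simp)

noncomputable def kernelsι : φ.kernels ⟶ T₁ where
  τ₁ := kernel.ι φ.τ₁
  τ₂ := kernel.ι φ.τ₂
  τ₃ := kernel.ι φ.τ₃
  comm₁₂ := by simp [kernels]
  comm₂₃ := by simp [kernels]

noncomputable def toImages : T₁ ⟶ φ.images where
  τ₁ := factorThruImage φ.τ₁
  τ₂ := factorThruImage φ.τ₂
  τ₃ := factorThruImage φ.τ₃
  comm₁₂ := image.factor_map (Arrow.homMk (f := Arrow.mk φ.τ₁) (g := Arrow.mk φ.τ₂)
    T₁.f T₂.f φ.comm₁₂.symm)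
  comm₂₃ := image.factor_map (Arrow.homMk (f := Arrow.mk φ.τ₂) (g := Arrow.mk φ.τ₃)
    T₁.g T₂.g φ.comm₂₃.symm)

/-- The nine lemma applied to the columns `0 → ker φ.τₖ → T₁.Xₖ → im φ.τₖ → 0`. -/
lemma shortExact_kernels_iff_shortExact_images (hT₁ : T₁.ShortExact) :
    φ.kernels.ShortExact ↔ φ.images.ShortExact :=
  (shortExact_of_shortExact_map_π (ShortComplex.mk φ.kernelsι φ.toImages
      (by ext <;> exact kernel_ι_comp_factorThruImage _))
    (shortExact_kernel_ι_factorThruImage φ.τ₁) (shortExact_kernel_ι_factorThruImage φ.τ₂)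
    (shortExact_kernel_ι_factorThruImage φ.τ₃)).shortExact_X₁_iff_shortExact_X₃ hT₁

end Hom

end CategoryTheory.ShortComplex

namespace HomologicalComplex

open CategoryTheory.ShortComplex

variable {C ι : Type*} [Category C] [Abelian C] {c : ComplexShape ι}

lemma iCycles_comp_toCycles (K : HomologicalComplex C c) (i j : ι) :
    K.iCycles i ≫ K.toCycles i j = 0 := by
  rw [← cancel_mono (K.iCycles j), Category.assoc, toCycles_i, iCycles_d, zero_comp]

lemma toCycles_comp_cyclesMap {K L : HomologicalComplex C c} (φ : K ⟶ L) (i j : ι) :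
    K.toCycles i j ≫ cyclesMap φ j = φ.f i ≫ L.toCycles i j := by
  simp [← cancel_mono (L.iCycles j), cyclesMap_i]

noncomputable def cyclesIsKernelToCycles (K : HomologicalComplex C c) (i j : ι)
    (hij : c.next i = j) :
    IsLimit (KernelFork.ofι (K.iCycles i) (K.iCycles_comp_toCycles i j)) :=
  isKernelOfComp (K.iCycles j) (K.d i j) (K.cyclesIsKernel i j hij) _ (K.toCycles_i i j)

variable {S : ShortComplex (HomologicalComplex C c)}

/-- The snake diagram of the morphism `d : S_i ⟶ Z_j` from the degree `i` row to the row of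
`j`-cycles: its kernel row is the row of `i`-cycles and its cokernel row the row of
`j`-th homology. -/
noncomputable def cyclesHomologySnakeInput (hS : S.ShortExact) (i j : ι) (hij : c.Rel i j) :
    SnakeInput C where
  L₀ := S.map (cyclesFunctor C c i)
  L₁ := S.map (eval C c i)
  L₂ := S.map (cyclesFunctor C c j)
  L₃ := S.map (homologyFunctor C c j)
  v₀₁ :=
    { τ₁ := S.X₁.iCycles i
      τ₂ := S.X₂.iCycles i
      τ₃ := S.X₃.iCycles i
      comm₁₂ := (cyclesMap_i S.f i).symm
      comm₂₃ := (cyclesMap_i S.g i).symm }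
  v₁₂ :=
    { τ₁ := S.X₁.toCycles i j
      τ₂ := S.X₂.toCycles i j
      τ₃ := S.X₃.toCycles i j
      comm₁₂ := toCycles_comp_cyclesMap S.f i j
      comm₂₃ := toCycles_comp_cyclesMap S.g i j }
  v₂₃ := S.mapNatTrans (natTransHomologyπ C c j)
  w₀₂ := by ext <;> exact iCycles_comp_toCycles _ i j
  w₁₃ := by ext <;> exact toCycles_comp_homologyπ _ i j
  h₀ := by
    refine isLimitOfIsLimitπ _ ?_ ?_ ?_ <;> refine (KernelFork.isLimitMapConeEquiv _ _).symm ?_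
    all_goals exact cyclesIsKernelToCycles _ i j (c.next_eq' hij)
  h₃ := by
    refine isColimitOfIsColimitπ _ ?_ ?_ ?_ <;>
      refine (CokernelCofork.isColimitMapCoconeEquiv _ _).symm ?_
    all_goals exact homologyIsCokernel _ i j (c.prev_eq' hij)
  L₁_exact := (hS.map_of_exact (eval C c i)).exact
  epi_L₁_g := (hS.map_of_exact (eval C c i)).epi_g
  L₂_exact := by
    have := hS.mono_f
    exact cycles_left_exact S hS.exact j
  mono_L₂_f := by
    have := hS.mono_f
    exact inferInstanceAs (Mono (cyclesMap S.f j))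

lemma shortExact_homology_of_shortExact_cycles (hS : S.ShortExact) {i j : ι} (hij : c.Rel i j)
    (hi : (S.map (cyclesFunctor C c i)).ShortExact)
    (hj : (S.map (cyclesFunctor C c j)).ShortExact) :
    (S.map (homologyFunctor C c j)).ShortExact := by
  let D := cyclesHomologySnakeInput hS i j hij
  have : Mono D.L₁.f := (hS.map_of_exact (eval C c i)).mono_f
  have : Epi D.L₂.g := hj.epi_g
  exact D.L₃_shortExact_iff.2 (D.L₀_shortExact_iff.1 hi)

lemma shortExact_cycles_of_mono_homologyMap (hS : S.ShortExact) {i j : ι} (hij : c.Rel i j)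
    [Mono (homologyMap S.f j)] : (S.map (cyclesFunctor C c i)).ShortExact := by
  let D := cyclesHomologySnakeInput hS i j hij
  have : Mono D.L₁.f := (hS.map_of_exact (eval C c i)).mono_f
  have : Mono D.L₃.f := inferInstanceAs (Mono (homologyMap S.f j))
  exact D.L₀_shortExact_iff.2 (D.δ_eq_zero_iff_mono_L₃_f.2 this)

noncomputable def cyclesIsoKernel (K : HomologicalComplex C c) {i j : ι} (hij : c.next i = j) :
    K.cycles i ≅ kernel (K.d i j) :=
  (K.cyclesIsKernel i j hij).conePointUniqueUpToIso (limit.isLimit _)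

lemma cyclesIsoKernel_hom_ι (K : HomologicalComplex C c) {i j : ι} (hij : c.next i = j) :
    (K.cyclesIsoKernel hij).hom ≫ kernel.ι (K.d i j) = K.iCycles i :=
  IsLimit.conePointUniqueUpToIso_hom_comp _ _ WalkingParallelPair.zero

lemma cyclesIsoKernel_hom_naturality {K L : HomologicalComplex C c} (φ : K ⟶ L) {i j : ι}
    (hij : c.next i = j) :
    (K.cyclesIsoKernel hij).hom ≫
        kernel.map (K.d i j) (L.d i j) (φ.f i) (φ.f j) (φ.comm i j).symm =
      cyclesMap φ i ≫ (L.cyclesIsoKernel hij).hom := by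
  rw [← cancel_mono (kernel.ι (L.d i j)), Category.assoc, Category.assoc, kernel.lift_ι,
    ← Category.assoc, cyclesIsoKernel_hom_ι, cyclesIsoKernel_hom_ι, cyclesMap_i]

noncomputable def cyclesIsoKernels (S : ShortComplex (HomologicalComplex C c)) {i j : ι}
    (hij : c.next i = j) :
    S.map (cyclesFunctor C c i) ≅ (S.mapNatTrans (dNatTrans C c i j)).kernels :=
  isoMk (S.X₁.cyclesIsoKernel hij) (S.X₂.cyclesIsoKernel hij) (S.X₃.cyclesIsoKernel hij)
    (cyclesIsoKernel_hom_naturality S.f hij) (cyclesIsoKernel_hom_naturality S.g hij)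

end HomologicalComplex

theorem stmt10_general (S : ShortComplex (CochainComplex A ℤ)) (hS : S.ShortExact) :
    -- (i) induced sequences on images
    ((∀ i : ℤ, ∃ w, (ShortComplex.mk
        (image.map (f := Arrow.mk (S.X₁.d i (i + 1))) (g := Arrow.mk (S.X₂.d i (i + 1)))
          (Arrow.homMk (u := S.f.f i) (v := S.f.f (i + 1)) (S.f.comm i (i + 1))))
        (image.map (f := Arrow.mk (S.X₂.d i (i + 1))) (g := Arrow.mk (S.X₃.d i (i + 1)))
          (Arrow.homMk (u := S.g.f i) (v := S.g.f (i + 1)) (S.g.comm i (i + 1)))) w).ShortExact) ↔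
    -- (ii) induced sequences on kernels
     (∀ i : ℤ, ∃ w, (ShortComplex.mk
        (kernel.map (S.X₁.d i (i + 1)) (S.X₂.d i (i + 1)) (S.f.f i) (S.f.f (i + 1))
          (S.f.comm i (i + 1)).symm)
        (kernel.map (S.X₂.d i (i + 1)) (S.X₃.d i (i + 1)) (S.g.f i) (S.g.f (i + 1))
          (S.g.comm i (i + 1)).symm) w).ShortExact)) ∧
    -- (ii) ↔ (iii) induced sequences on cohomology
    ((∀ i : ℤ, ∃ w, (ShortComplex.mk
        (kernel.map (S.X₁.d i (i + 1)) (S.X₂.d i (i + 1)) (S.f.f i) (S.f.f (i + 1))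
          (S.f.comm i (i + 1)).symm)
        (kernel.map (S.X₂.d i (i + 1)) (S.X₃.d i (i + 1)) (S.g.f i) (S.g.f (i + 1))
          (S.g.comm i (i + 1)).symm) w).ShortExact) ↔
     (∀ i : ℤ, ∃ w, (ShortComplex.mk
        (HomologicalComplex.homologyMap S.f i)
        (HomologicalComplex.homologyMap S.g i) w).ShortExact)) := by
  have hcycles (i : ℤ) :
      (∃ w, _) ↔ (S.map (HomologicalComplex.cyclesFunctor A _ i)).ShortExact :=
    (ShortComplex.exists_shortExact_mk_iff
        (S.mapNatTrans (HomologicalComplex.dNatTrans A _ i (i + 1))).kernels).trans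
      (ShortComplex.shortExact_iff_of_iso (HomologicalComplex.cyclesIsoKernels S (by simp))).symm
  refine ⟨forall_congr' fun i => ?_, fun h i => ?_, fun h i => ?_⟩
  · have h := (S.mapNatTrans (HomologicalComplex.dNatTrans A _ i (i + 1))
      ).shortExact_kernels_iff_shortExact_images (hS.map_of_exact (HomologicalComplex.eval A _ i))
    rw [← ShortComplex.exists_shortExact_mk_iff, ← ShortComplex.exists_shortExact_mk_iff] at h
    exact h.symm
  · have hZ (j : ℤ) := (hcycles j).1 (h j)
    exact ⟨_, HomologicalComplex.shortExact_homology_of_shortExact_cycles hS (by simp)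
      (hZ (i - 1)) (hZ i)⟩
  · obtain ⟨_, hH⟩ := h (i + 1)
    have := hH.mono_f
    exact (hcycles i).2 (HomologicalComplex.shortExact_cycles_of_mono_homologyMap hS rfl)

theorem stmt10 (S : ShortComplex (CochainComplex A ℤ)) (hS : S.ShortExact)
    (h1 : Bdd S.X₁) (h2 : Bdd S.X₂) (h3 : Bdd S.X₃) :
    -- (i) induced sequences on images
    ((∀ i : ℤ, ∃ w, (ShortComplex.mk
        (image.map (f := Arrow.mk (S.X₁.d i (i + 1))) (g := Arrow.mk (S.X₂.d i (i + 1)))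
          (Arrow.homMk (u := S.f.f i) (v := S.f.f (i + 1)) (S.f.comm i (i + 1))))
        (image.map (f := Arrow.mk (S.X₂.d i (i + 1))) (g := Arrow.mk (S.X₃.d i (i + 1)))
          (Arrow.homMk (u := S.g.f i) (v := S.g.f (i + 1)) (S.g.comm i (i + 1)))) w).ShortExact) ↔
    -- (ii) induced sequences on kernels
     (∀ i : ℤ, ∃ w, (ShortComplex.mk
        (kernel.map (S.X₁.d i (i + 1)) (S.X₂.d i (i + 1)) (S.f.f i) (S.f.f (i + 1))
          (S.f.comm i (i + 1)).symm)
        (kernel.map (S.X₂.d i (i + 1)) (S.X₃.d i (i + 1)) (S.g.f i) (S.g.f (i + 1))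
          (S.g.comm i (i + 1)).symm) w).ShortExact)) ∧
    -- (ii) ↔ (iii) induced sequences on cohomology
    ((∀ i : ℤ, ∃ w, (ShortComplex.mk
        (kernel.map (S.X₁.d i (i + 1)) (S.X₂.d i (i + 1)) (S.f.f i) (S.f.f (i + 1))
          (S.f.comm i (i + 1)).symm)
        (kernel.map (S.X₂.d i (i + 1)) (S.X₃.d i (i + 1)) (S.g.f i) (S.g.f (i + 1))
          (S.g.comm i (i + 1)).symm) w).ShortExact) ↔
     (∀ i : ℤ, ∃ w, (ShortComplex.mk
        (HomologicalComplex.homologyMap S.f i)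
        (HomologicalComplex.homologyMap S.g i) w).ShortExact)) :=
  stmt10_general S hS
end

section
/- Let B be an abelian category and 0 → U → V → W → 0 a short exact sequence of bounded complexes over B in which U or W is acyclic. Then for every i, the class of Im(d_V^i) in the Grothendieck group K_0(B) satisfies [Im(d_V^i)] = [Im(d_U^i)] + [Im(d_W^i)]. -/
/-! Write `Bᵏ` for the image of `dᵏ⁻¹`, `Zᵏ` for the cycles and `Hᵏ` for the cohomology of a
complex `X`. The short exact sequences `0 → Zᵏ → Xᵏ → Bᵏ⁺¹ → 0` and `0 → Bᵏ → Zᵏ → Hᵏ → 0` give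
`χ Xᵏ = χ Bᵏ + χ Hᵏ + χ Bᵏ⁺¹`. Along `0 → U → V → W → 0` the term `χ Xᵏ` is additive degreewise,
and so is `χ Hᵏ`, because acyclicity of `U` or `W` kills the connecting morphisms of the long
exact cohomology sequence. Hence the defect `χ B_Vᵏ - χ B_Uᵏ - χ B_Wᵏ` changes sign from one
degree to the next; it vanishes below the degrees where `V` lives, so it vanishes everywhere. -/

open CategoryTheory CategoryTheory.Limits ZeroObject

universe w w' v u

variable {A : Type u} [Category.{v} A] [Abelian A]

lemma CategoryTheory.ShortComplex.ShortExact.δ_eq_zero_of_acyc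
    {S : ShortComplex (CochainComplex A ℤ)} (hS : S.ShortExact)
    (hac : Acyc S.X₁ ∨ Acyc S.X₃) (i j : ℤ) (hij : (ComplexShape.up ℤ).Rel i j) :
    hS.δ i j hij = 0 := by
  rcases hac with h | h
  · exact (h j).isZero_homology.eq_of_tgt _ _
  · exact (h i).isZero_homology.eq_of_src _ _

section Additive

variable {G : Type} [AddCommGroup G] {χ : A → G}
  (hadd : ∀ T : ShortComplex A, T.ShortExact → χ T.X₂ = χ T.X₁ + χ T.X₃)
include hadd

lemma chi_eq_zero_of_isZero {Z : A} (hZ : IsZero Z) : χ Z = 0 := by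
  have h := hadd (ShortComplex.mk (0 : Z ⟶ Z) (0 : Z ⟶ Z) comp_zero)
    (.mk' (ShortComplex.exact_of_isZero_X₂ _ hZ) (hZ.mono _) (hZ.epi _))
  exact left_eq_add.mp h

lemma chi_eq_of_iso {X Y : A} (e : X ≅ Y) : χ X = χ Y := by
  have h := hadd (ShortComplex.mk e.hom (0 : Y ⟶ 0) comp_zero)
    (.mk' ((ShortComplex.exact_iff_epi _ rfl).2 inferInstance) inferInstance
      ((isZero_zero A).epi _))
  rw [h, chi_eq_zero_of_isZero hadd (isZero_zero A), add_zero]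

lemma chi_eq_add_chi_image_of_isLimit {K X Y : A} (ι : K ⟶ X) (f : X ⟶ Y) (w : ι ≫ f = 0)
    (hι : IsLimit (KernelFork.ofι ι w)) : χ X = χ K + χ (image f) := by
  let T := ShortComplex.mk ι (factorThruImage f)
    (by rw [← cancel_mono (image.ι f), Category.assoc, image.fac, w, zero_comp])
  let φ : T ⟶ ShortComplex.mk ι f w :=
    { τ₁ := 𝟙 _, τ₂ := 𝟙 _, τ₃ := image.ι f }
  have : Mono ι := mono_of_isLimit_fork hι
  exact hadd T (.mk' ((ShortComplex.exact_iff_of_epi_of_isIso_of_mono φ).2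
    (ShortComplex.exact_of_f_is_kernel _ hι)) inferInstance inferInstance)

lemma chi_eq_chi_image_add_of_isColimit {X Y Q : A} (f : X ⟶ Y) (π : Y ⟶ Q) (w : f ≫ π = 0)
    (hπ : IsColimit (CokernelCofork.ofπ π w)) : χ Y = χ (image f) + χ Q := by
  let T := ShortComplex.mk (image.ι f) π
    (by rw [← cancel_epi (factorThruImage f), image.fac_assoc, w, comp_zero])
  let φ : ShortComplex.mk f π w ⟶ T :=
    { τ₁ := factorThruImage f, τ₂ := 𝟙 _, τ₃ := 𝟙 _ }
  have : Epi π := epi_of_isColimit_cofork hπ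
  exact hadd T (.mk' ((ShortComplex.exact_iff_of_epi_of_isIso_of_mono φ).1
    (ShortComplex.exact_of_g_is_cokernel _ hπ)) inferInstance inferInstance)

lemma chi_X_succ_eq (M : CochainComplex A ℤ) (i : ℤ) :
    χ (M.X (i + 1)) = χ (image (M.d i (i + 1))) + χ (M.homology (i + 1)) +
      χ (image (M.d (i + 1) (i + 1 + 1))) := by
  have hcycles := chi_eq_add_chi_image_of_isLimit hadd _ _ _
    (M.cyclesIsKernel (i + 1) (i + 1 + 1) (by simp))
  have hhomology := chi_eq_chi_image_add_of_isColimit hadd _ _ _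
    (M.homologyIsCokernel i (i + 1) (by simp))
  have himage : χ (image (M.toCycles i (i + 1))) = χ (image (M.d i (i + 1))) :=
    chi_eq_of_iso hadd (image.isoStrongEpiMono (factorThruImage _)
      (image.ι _ ≫ M.iCycles (i + 1)) (by simp))
  rw [hcycles, hhomology, himage]

lemma chi_homology_eq_add_of_acyc {S : ShortComplex (CochainComplex A ℤ)} (hS : S.ShortExact)
    (hac : Acyc S.X₁ ∨ Acyc S.X₃) (i : ℤ) :
    χ (S.X₂.homology i) = χ (S.X₁.homology i) + χ (S.X₃.homology i) := by
  have hmono := (hS.homology_exact₁ (i - 1) i (by simp)).mono_g (hS.δ_eq_zero_of_acyc hac _ _ _)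
  have hepi := (hS.homology_exact₃ i (i + 1) (by simp)).epi_f (hS.δ_eq_zero_of_acyc hac _ _ _)
  exact hadd _ (.mk' (hS.homology_exact₂ i) hmono hepi)

lemma chi_image_d_eq_add_succ {S : ShortComplex (CochainComplex A ℤ)} (hS : S.ShortExact)
    (hac : Acyc S.X₁ ∨ Acyc S.X₃) (i : ℤ)
    (h : χ (image (S.X₂.d i (i + 1))) =
      χ (image (S.X₁.d i (i + 1))) + χ (image (S.X₃.d i (i + 1)))) :
    χ (image (S.X₂.d (i + 1) (i + 1 + 1))) =
      χ (image (S.X₁.d (i + 1) (i + 1 + 1))) + χ (image (S.X₃.d (i + 1) (i + 1 + 1))) := by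
  have hX : χ (S.X₂.X (i + 1)) = χ (S.X₁.X (i + 1)) + χ (S.X₃.X (i + 1)) :=
    hadd _ ((HomologicalComplex.shortExact_iff_degreewise_shortExact S).1 hS (i + 1))
  rw [chi_X_succ_eq hadd, chi_X_succ_eq hadd, chi_X_succ_eq hadd, h,
    chi_homology_eq_add_of_acyc hadd hS hac] at hX
  linear_combination (norm := abel) hX

lemma chi_image_d_eq_add_of_isZero {S : ShortComplex (CochainComplex A ℤ)} (hS : S.ShortExact)
    (i : ℤ) (hV : IsZero (S.X₂.X i)) :
    χ (image (S.X₂.d i (i + 1))) =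
      χ (image (S.X₁.d i (i + 1))) + χ (image (S.X₃.d i (i + 1))) := by
  have hSi := (HomologicalComplex.shortExact_iff_degreewise_shortExact S).1 hS i
  have : Mono (S.f.f i) := hSi.mono_f
  have : Epi (S.g.f i) := hSi.epi_g
  have himage {X Y : A} (f : X ⟶ Y) (hX : IsZero X) : χ (image f) = 0 :=
    chi_eq_zero_of_isZero hadd (hX.of_epi (factorThruImage f))
  rw [himage _ hV, himage _ (hV.of_mono (S.f.f i)), himage _ (hV.of_epi (S.g.f i)), add_zero]

end Additive

/-- The class map `B → K₀(B)` is modelled, via the universal property of `K₀(B)`, by an arbitrary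
function `χ` into an abelian group that is additive on short exact sequences. -/
theorem stmt11_general (S : ShortComplex (CochainComplex A ℤ)) (hS : S.ShortExact)
    (h2 : Bdd S.X₂)
    (hac : Acyc S.X₁ ∨ Acyc S.X₃)
    (G : Type) [AddCommGroup G] (χ : A → G)
    (hadd : ∀ T : ShortComplex A, T.ShortExact → χ T.X₂ = χ T.X₁ + χ T.X₃)
    (i : ℤ) :
    χ (image (S.X₂.d i (i + 1))) =
      χ (image (S.X₁.d i (i + 1))) + χ (image (S.X₃.d i (i + 1))) := by
  obtain ⟨a, _, ha⟩ := h2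
  obtain ⟨m, hmi, hma⟩ : ∃ m ≤ i, m < a := ⟨min i (a - 1), min_le_left _ _, by omega⟩
  induction i, hmi using Int.leInduction with
  | base => exact chi_image_d_eq_add_of_isZero hadd hS m (ha m (.inl hma))
  | succ j _ ih => exact chi_image_d_eq_add_succ hadd hS hac j ih

/-- The class of `Im(d_V^i)` in the Grothendieck group `K₀` is additive on a short exact
sequence of bounded complexes whose first or third term is acyclic.  (The Grothendieck
group is characterized by its universal property: the statement is formulated for an
arbitrary additive-on-short-exact-sequences, iso-invariant function `χ` with values in an
abelian group, i.e. for an arbitrary factorization through `K₀`.) -/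
theorem stmt11 (S : ShortComplex (CochainComplex A ℤ)) (hS : S.ShortExact)
    (h1 : Bdd S.X₁) (h2 : Bdd S.X₂) (h3 : Bdd S.X₃)
    (hac : Acyc S.X₁ ∨ Acyc S.X₃)
    (G : Type) [AddCommGroup G] (χ : A → G)
    (hiso : ∀ {X Y : A}, (X ≅ Y) → χ X = χ Y)
    (hadd : ∀ T : ShortComplex A, T.ShortExact → χ T.X₂ = χ T.X₁ + χ T.X₃)
    (i : ℤ) :
    χ (image (S.X₂.d i (i + 1))) =
      χ (image (S.X₁.d i (i + 1))) + χ (image (S.X₃.d i (i + 1))) :=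
  stmt11_general S hS h2 hac G χ hadd i
end

section
/- Let A be a finitary hereditary abelian category over a finite field. For objects M, B, A, N of A, the set of morphisms g: B → A with Ker(g) ≅ M and Coker(g) ≅ N is in bijection with the disjoint union over isomorphism classes [L] of bounded complexes with H^n(L) ≅ M and H^{n+1}(L) ≅ N of the sets Ext^1_{C^b(A)}(U_{B,n}, U_{A,n+1})_L of equivalence classes of extensions of U_{B,n} by U_{A,n+1} with middle term isomorphic to L. -/
open CategoryTheory CategoryTheory.Limits ZeroObject

universe w w' v u

variable {A : Type u} [Category.{v} A] [Abelian A]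

section Counting

variable (C : Type w) [Category.{w'} C] [Abelian C]

variable {C} in
/-- An extension of `L` by `M`: a short exact sequence `0 → M → E → L → 0`. -/
structure Extn (M L : C) where
  E : C
  ι : M ⟶ E
  π : E ⟶ L
  w : ι ≫ π = 0
  shortExact : (ShortComplex.mk ι π w).ShortExact

variable {C} in
/-- Equivalence of extensions (isomorphism of the middle terms compatible with the maps). -/
def ExtnEquiv {M L : C} (e e' : Extn M L) : Prop :=
  ∃ φ : e.E ≅ e'.E, e.ι ≫ φ.hom = e'.ι ∧ φ.hom ≫ e'.π = e.π

variable {C} in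
/-- `|Ext¹(L, M)|`: the number of equivalence classes of extensions of `L` by `M`. -/
noncomputable def ext1Card (L M : C) : ℕ :=
  Nat.card (Quot (ExtnEquiv (M := M) (L := L)))

variable {C} in
/-- `|Ext¹(L, M)_X|`: the number of equivalence classes of extensions of `L` by `M`
whose middle term is isomorphic to `X`. -/
noncomputable def extCardWith (L M X : C) : ℕ :=
  Nat.card (Quot (fun e e' : {e : Extn M L // Nonempty (e.E ≅ X)} => ExtnEquiv e.1 e'.1))

variable {C} in
/-- `|Hom(X, Y)|`. -/
noncomputable def homCard (X Y : C) : ℕ := Nat.card (X ⟶ Y)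

variable {C} in
/-- `a_X = |Aut X|`. -/
noncomputable def autCard (X : C) : ℕ := Nat.card (Aut X)

/-- The set of isomorphism classes of objects of `C`. -/
abbrev IsoCls : Type _ := Quotient (CategoryTheory.isIsomorphicSetoid C)

variable {C} in
/-- The Hall number `g^X_{AB}`: the number of subobjects of `X` isomorphic to `B`
with quotient isomorphic to `A`. -/
noncomputable def hallNum (X A B : C) : ℕ :=
  Nat.card {S : Subobject X // Nonempty ((S : C) ≅ B) ∧ Nonempty (cokernel S.arrow ≅ A)}

variable {C} in
/-- `V(M, B, A, N)`: the set of exact sequences `0 → M → B → A → N → 0`. -/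
def Vset (M B A N : C) : Type _ :=
  {t : (M ⟶ B) × (B ⟶ A) × (A ⟶ N) //
    Mono t.1 ∧ Epi t.2.2 ∧
    ∃ w1 : t.1 ≫ t.2.1 = 0, (ShortComplex.mk t.1 t.2.1 w1).Exact ∧
    ∃ w2 : t.2.1 ≫ t.2.2 = 0, (ShortComplex.mk t.2.1 t.2.2 w2).Exact}

variable {C} in
/-- `γ^{MN}_{AB} = |V(M,B,A,N)| / (a_A a_B)`. -/
noncomputable def gammaC (X Y M N : C) : ℚ :=
  (Nat.card (Vset M Y X N) : ℚ) / ((autCard X : ℚ) * (autCard Y : ℚ))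

end Counting

/-! In an extension `0 ⟶ U_{X,n+1} ⟶ L ⟶ U_{Y,n} ⟶ 0`, degreewise exactness puts `L` in degrees
`n` and `n+1`, where `π` and `ι` identify it with `Y` and `X`. So `L` is, up to equivalence of
extensions, the two-term complex `Y ⟶ X` given by its one differential, and this differential is an
invariant of the equivalence class. Conversely every `g : Y ⟶ X` is the differential of the
two-term complex `double g`, whose cohomology is `ker g` in degree `n` and `coker g` in degree
`n+1`. -/

section StalkExtensions

open HomologicalComplex

variable {X Y : A} {n : ℤ}

-- Stated with `Uc` rather than `single`, so that instances such as `Extn.isIso_π_f` are found.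
noncomputable def ucXIso (X : A) (n : ℤ) : (Uc X n).X n ≅ X :=
  singleObjXSelf _ _ X

lemma isZero_uc_X (X : A) {n i : ℤ} (h : i ≠ n) : IsZero ((Uc X n).X i) :=
  isZero_single_obj_X _ _ _ _ h

lemma up_rel_succ (n : ℤ) : (ComplexShape.up ℤ).Rel n (n + 1) := rfl

noncomputable def stalkToDouble (g : Y ⟶ X) (n : ℤ) : Uc X (n + 1) ⟶ double g (up_rel_succ n) :=
  mkHomFromSingle (doubleXIso₁ g _ (by omega)).inv
    (fun k _ => by rw [double_d_eq_zero₀ _ _ _ _ (by omega), comp_zero])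

noncomputable def doubleToStalk (g : Y ⟶ X) (n : ℤ) : double g (up_rel_succ n) ⟶ Uc Y n :=
  mkHomToSingle (doubleXIso₀ g _).hom
    (fun k _ => by rw [double_d_eq_zero₁ _ _ _ _ (by omega), zero_comp])

lemma stalkToDouble_f (g : Y ⟶ X) (n : ℤ) :
    (stalkToDouble g n).f (n + 1) =
      (ucXIso X _).hom ≫ (doubleXIso₁ g _ (by omega)).inv :=
  mkHomFromSingle_f _ _

lemma doubleToStalk_f (g : Y ⟶ X) (n : ℤ) :
    (doubleToStalk g n).f n = (doubleXIso₀ g _).hom ≫ (ucXIso Y _).inv :=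
  mkHomToSingle_f _ _

lemma stalkToDouble_comp_doubleToStalk (g : Y ⟶ X) (n : ℤ) :
    stalkToDouble g n ≫ doubleToStalk g n = 0 :=
  from_single_hom_ext ((isZero_uc_X Y (n := n) (i := n + 1) (by omega)).eq_of_tgt _ _)

lemma stalkToDouble_doubleToStalk_shortExact (g : Y ⟶ X) (n : ℤ) :
    (ShortComplex.mk _ _ (stalkToDouble_comp_doubleToStalk g n)).ShortExact := by
  apply shortExact_of_degreewise_shortExact
  intro i
  by_cases hn : i = n
  · subst hn
    refine (ShortComplex.Splitting.ofIsZeroOfIsIso _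
      (isZero_uc_X _ (by omega)) ?_).shortExact
    show IsIso ((doubleToStalk g i).f i)
    rw [doubleToStalk_f]
    exact (doubleXIso₀ g _ ≪≫ (ucXIso Y _).symm).isIso_hom
  by_cases hn1 : i = n + 1
  · subst hn1
    refine (ShortComplex.Splitting.ofIsIsoOfIsZero _ ?_
      (isZero_uc_X _ (by omega))).shortExact
    show IsIso ((stalkToDouble g n).f (n + 1))
    rw [stalkToDouble_f]
    exact (ucXIso X _ ≪≫ (doubleXIso₁ g _ (by omega)).symm).isIso_hom
  · refine (ShortComplex.Splitting.ofIsZeroOfIsIso _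
      (isZero_uc_X _ hn1) ?_).shortExact
    exact isIso_of_source_target_iso_zero _ (isZero_double_X g (up_rel_succ n) _ hn hn1).isoZero
      (isZero_uc_X _ hn).isoZero

noncomputable abbrev doubleExtn (g : Y ⟶ X) (n : ℤ) : Extn (Uc X (n + 1)) (Uc Y n) :=
  ⟨_, _, _, _, stalkToDouble_doubleToStalk_shortExact g n⟩

namespace Extn

variable (e : Extn (Uc X (n + 1)) (Uc Y n))

lemma shortExact_f (i : ℤ) :
    (ShortComplex.mk (e.ι.f i) (e.π.f i) (by rw [← comp_f, e.w, zero_f])).ShortExact :=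
  (shortExact_iff_degreewise_shortExact _).1 e.shortExact i

instance isIso_π_f : IsIso (e.π.f n) :=
  (e.shortExact_f n).isIso_g_iff.2 (isZero_uc_X _ (by omega))

instance isIso_ι_f : IsIso (e.ι.f (n + 1)) :=
  (e.shortExact_f (n + 1)).isIso_f_iff.2 (isZero_uc_X _ (by omega))

lemma isZero_E_X (i : ℤ) (hn : i ≠ n) (hn1 : i ≠ n + 1) : IsZero (e.E.X i) := by
  have : IsIso (e.π.f i) :=
    (e.shortExact_f i).isIso_g_iff.2 (isZero_uc_X _ hn1)
  exact (isZero_uc_X _ hn).of_iso (asIso (e.π.f i))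

noncomputable def stalkHom : Y ⟶ X :=
  (ucXIso Y n).inv ≫ inv (e.π.f n) ≫ e.E.d n (n + 1) ≫
    inv (e.ι.f (n + 1)) ≫ (ucXIso X (n + 1)).hom

lemma stalkHom_eq_of_extnEquiv {e e' : Extn (Uc X (n + 1)) (Uc Y n)} (h : ExtnEquiv e e') :
    e.stalkHom = e'.stalkHom := by
  obtain ⟨φ, hι, hπ⟩ := h
  have hπn : e.π.f n = φ.hom.f n ≫ e'.π.f n := by rw [← hπ, comp_f]
  have hιn : e'.ι.f (n + 1) = e.ι.f (n + 1) ≫ φ.hom.f (n + 1) := by rw [← hι, comp_f]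
  have hd : inv (φ.hom.f n) ≫ e.E.d n (n + 1) ≫ φ.hom.f (n + 1) = e'.E.d n (n + 1) := by
    rw [IsIso.inv_comp_eq, Hom.comm]
  simp only [stalkHom, hπn, hιn, IsIso.inv_comp, Category.assoc, ← hd, IsIso.hom_inv_id_assoc]

lemma d_eq_stalkHom : e.E.d n (n + 1) =
    e.π.f n ≫ (ucXIso Y n).hom ≫ e.stalkHom ≫ (ucXIso X (n + 1)).inv ≫ e.ι.f (n + 1) := by
  simp [stalkHom]

lemma stalkHom_eq_of_d_eq {g : Y ⟶ X} (h : e.E.d n (n + 1) =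
    e.π.f n ≫ (ucXIso Y n).hom ≫ g ≫ (ucXIso X (n + 1)).inv ≫ e.ι.f (n + 1)) :
    e.stalkHom = g := by
  simp [stalkHom, h]

end Extn

lemma stalkHom_doubleExtn (g : Y ⟶ X) (n : ℤ) : (doubleExtn g n).stalkHom = g :=
  Extn.stalkHom_eq_of_d_eq _ (by simp [doubleExtn, doubleToStalk_f, stalkToDouble_f, double_d])

noncomputable def Extn.fromDouble (e : Extn (Uc X (n + 1)) (Uc Y n)) :
    double e.stalkHom (up_rel_succ n) ⟶ e.E :=
  mkHomFromDouble _ (by omega) ((ucXIso Y n).inv ≫ inv (e.π.f n))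
    ((ucXIso X (n + 1)).inv ≫ e.ι.f (n + 1)) (by simp [e.d_eq_stalkHom])
    (fun k hk => by
      rw [Category.assoc, e.ι.comm, (isZero_uc_X X (i := k) (by simp at hk; omega)).eq_of_tgt
        ((Uc X (n + 1)).d (n + 1) k) 0, zero_comp, comp_zero])

instance (e : Extn (Uc X (n + 1)) (Uc Y n)) : IsIso e.fromDouble := by
  have (i : ℤ) : IsIso (e.fromDouble.f i) := by
    by_cases hn : i = n
    · rw [hn, Extn.fromDouble, mkHomFromDouble_f₀]
      infer_instance
    by_cases hn1 : i = n + 1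
    · rw [hn1, Extn.fromDouble, mkHomFromDouble_f₁]
      infer_instance
    · exact isIso_of_source_target_iso_zero _ (isZero_double_X _ _ _ hn hn1).isoZero
        (e.isZero_E_X i hn hn1).isoZero
  exact Hom.isIso_of_components _

lemma doubleExtn_stalkHom_equiv (e : Extn (Uc X (n + 1)) (Uc Y n)) :
    ExtnEquiv (doubleExtn e.stalkHom n) e :=
  ⟨asIso e.fromDouble,
    from_single_hom_ext (by simp [stalkToDouble_f, Extn.fromDouble]; rfl),
    to_single_hom_ext (by simp [doubleToStalk_f, Extn.fromDouble]; rfl)⟩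

noncomputable def doubleHomologyIsoKernel (g : Y ⟶ X) (n : ℤ) :
    (double g (up_rel_succ n)).homology n ≅ kernel g :=
  (double g _).homologyIsoSc' (n - 1) n (n + 1) (by simp) (by simp) ≪≫
    ShortComplex.homologyMapIso (ShortComplex.isoMk
      (S₁ := ShortComplex.mk ((double g (up_rel_succ n)).d (n - 1) n)
        ((double g (up_rel_succ n)).d n (n + 1)) (by simp))
      (S₂ := ShortComplex.mk (0 : (double g (up_rel_succ n)).X (n - 1) ⟶ Y) g zero_comp)
      (Iso.refl _) (doubleXIso₀ g (up_rel_succ n)) (doubleXIso₁ g (up_rel_succ n) (by omega))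
      (by simp [double_d_eq_zero₁ g (up_rel_succ n) (n - 1) n (by omega)])
      (by simp [double_d])) ≪≫
    (ShortComplex.LeftHomologyData.ofHasKernel _ rfl).homologyIso

noncomputable def doubleHomologyIsoCokernel (g : Y ⟶ X) (n : ℤ) :
    (double g (up_rel_succ n)).homology (n + 1) ≅ cokernel g :=
  (double g _).homologyIsoSc' n (n + 1) (n + 2) (by simp) (by simp; omega) ≪≫
    ShortComplex.homologyMapIso (ShortComplex.isoMk
      (S₁ := ShortComplex.mk ((double g (up_rel_succ n)).d n (n + 1))
        ((double g (up_rel_succ n)).d (n + 1) (n + 2)) (by simp))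
      (S₂ := ShortComplex.mk g (0 : X ⟶ (double g (up_rel_succ n)).X (n + 2)) comp_zero)
      (doubleXIso₀ g (up_rel_succ n)) (doubleXIso₁ g (up_rel_succ n) (by omega)) (Iso.refl _)
      (by simp [double_d])
      (by simp [double_d_eq_zero₀ g (up_rel_succ n) (n + 1) (n + 2) (by omega)])) ≪≫
    (ShortComplex.RightHomologyData.ofHasCokernel _ rfl).homologyIso

end StalkExtensions

theorem stmt12 (k : Type) [Field k] [Finite k] [CategoryTheory.Linear k A]
    [∀ X Y : A, Finite (X ⟶ Y)]
    (hfinext : ∀ X Y : A, Finite (Quot (ExtnEquiv (M := Y) (L := X))))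
    [HasExt.{w} A]
    (hered : ∀ (X Y : A) (n : ℕ), 2 ≤ n → Subsingleton (Abelian.Ext X Y n))
    (M X Y N : A) (n : ℤ) :
    Nonempty
      ({g : Y ⟶ X // Nonempty (kernel g ≅ M) ∧ Nonempty (cokernel g ≅ N)} ≃
        Quot (fun e e' :
            {e : Extn (Uc X (n + 1)) (Uc Y n) //
              Nonempty (e.E.homology n ≅ M) ∧ Nonempty (e.E.homology (n + 1) ≅ N)} =>
          ExtnEquiv e.1 e'.1)) := by
  refine ⟨Equiv.ofBijective (fun g => Quot.mk _ ⟨doubleExtn g.1 n,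
      ⟨doubleHomologyIsoKernel g.1 n ≪≫ g.2.1.some⟩,
      ⟨doubleHomologyIsoCokernel g.1 n ≪≫ g.2.2.some⟩⟩) ⟨?_, ?_⟩⟩
  · intro g g' h
    have := congrArg
      (Quot.lift (fun e => e.1.stalkHom) (fun _ _ => Extn.stalkHom_eq_of_extnEquiv)) h
    simp only [stalkHom_doubleExtn] at this
    exact Subtype.ext this
  · refine Quot.ind ?_
    rintro ⟨e, ⟨hM⟩, ⟨hN⟩⟩
    obtain ⟨φ, -, -⟩ := doubleExtn_stalkHom_equiv e
    exact ⟨⟨e.stalkHom,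
      ⟨(doubleHomologyIsoKernel _ n).symm ≪≫ HomologicalComplex.homologyMapIso φ n ≪≫ hM⟩,
      ⟨(doubleHomologyIsoCokernel _ n).symm ≪≫
        HomologicalComplex.homologyMapIso φ (n + 1) ≪≫ hN⟩⟩,
      Quot.sound (doubleExtn_stalkHom_equiv e)⟩
end

section
/- Let A be a finitary hereditary abelian category over a finite field. For objects A, B, C of A, the Hall number satisfies the homological formula g^C_{AB} = (|Ext^1_A(A,B)_C| / |Hom_A(A,B)|) · (a_C / (a_A a_B)), where Ext^1_A(A,B)_C is the set of extension classes of A by B with middle term isomorphic to C. -/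
open CategoryTheory CategoryTheory.Limits ZeroObject

universe w w' v u

variable {A : Type u} [Category.{v} A] [Abelian A]

/-!
Count the short exact sequences `0 → Y → Z → X → 0`, i.e. pairs of morphisms `(f, g)`, in two ways
(Riedtmann). The group `Aut Y × Aut X` acts freely on them, and its orbits are exactly the
subobjects of `Z` counted by `g^Z_{XY}`. The group `Aut Z` acts with the classes in
`Ext¹(X, Y)_Z` as orbits, and the stabilizer of `(f, g)` consists of the shears `1 + g ≫ φ ≫ f`,
one for each `φ : X ⟶ Y`.
-/

open MulAction

theorem MulAction.card_mul_eq_card_orbits_mul_card {G S : Type*} [Group G] [Finite G] [Finite S]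
    [MulAction G S] {n : ℕ} (hn : ∀ s : S, Nat.card (stabilizer G s) = n) :
    Nat.card S * n = Nat.card (Quotient (orbitRel G S)) * Nat.card G := by
  cases nonempty_fintype G
  cases nonempty_fintype S
  classical
  rw [Nat.card_congr (selfEquivSigmaOrbitsQuotientStabilizer G S), Nat.card_eq_fintype_card,
    Fintype.card_sigma, Finset.sum_mul]
  have hω : ∀ ω : Quotient (orbitRel G S),
      Fintype.card (G ⧸ stabilizer G ω.out) * n = Nat.card G := fun ω => by
    rw [← hn ω.out, ← Nat.card_eq_fintype_card, ← Subgroup.card_eq_card_quotient_mul_card_subgroup]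
  simp only [hω, Finset.sum_const, smul_eq_mul, Finset.card_univ, Nat.card_eq_fintype_card]

theorem MulAction.card_orbits_eq_of_surjective {G S β : Type*} [Group G] [MulAction G S]
    (F : S → β) (hF : Function.Surjective F) (h : ∀ a b, F a = F b ↔ ∃ g : G, g • a = b) :
    Nat.card (Quotient (orbitRel G S)) = Nat.card β :=
  Nat.card_congr <| (Quotient.congrRight fun a b => by
    rw [orbitRel_apply, mem_orbit_iff, ← h, eq_comm]; rfl).trans
    (Setoid.quotientKerEquivOfSurjective F hF)

instance CategoryTheory.Aut.finite {C : Type*} [Category C] (X : C) [Finite (X ⟶ X)] :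
    Finite (Aut X) :=
  Finite.of_injective (fun f : Aut X => f.hom) fun _ _ h => Iso.ext h

@[ext]
structure ShortExactSeq (X₁ X₂ X₃ : A) where
  f : X₁ ⟶ X₂
  g : X₂ ⟶ X₃
  w : f ≫ g = 0
  shortExact : (ShortComplex.mk f g w).ShortExact

namespace ShortExactSeq

variable {X₁ X₂ X₃ : A} (q : ShortExactSeq X₁ X₂ X₃)

instance : Mono q.f := q.shortExact.mono_f
instance : Epi q.g := q.shortExact.epi_g

instance [Finite (X₁ ⟶ X₂)] [Finite (X₂ ⟶ X₃)] : Finite (ShortExactSeq X₁ X₂ X₃) :=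
  Finite.of_injective (fun q => (q.f, q.g)) fun _ _ h =>
    ShortExactSeq.ext (congrArg Prod.fst h) (congrArg Prod.snd h)

@[simps]
def mapIso {Y₁ Y₂ Y₃ : A} (e₁ : X₁ ≅ Y₁) (e₂ : X₂ ≅ Y₂) (e₃ : X₃ ≅ Y₃) :
    ShortExactSeq Y₁ Y₂ Y₃ where
  f := e₁.inv ≫ q.f ≫ e₂.hom
  g := e₂.inv ≫ q.g ≫ e₃.hom
  w := by simp [reassoc_of% q.w]
  shortExact := ShortComplex.shortExact_of_iso
    (ShortComplex.isoMk e₁ e₂ e₃ (by simp) (by simp)) q.shortExact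

@[simps]
noncomputable def ofCokernel {Y : A} (i : Y ⟶ X₂) [Mono i] : ShortExactSeq Y X₂ (cokernel i) where
  f := i
  g := cokernel.π i
  w := cokernel.condition i
  shortExact := .mk' (ShortComplex.exact_of_g_is_cokernel _ (cokernelIsCokernel i))
    inferInstance inferInstance

instance : SMul (Aut X₁ × Aut X₃) (ShortExactSeq X₁ X₂ X₃) where
  smul a q := q.mapIso a.1 (Iso.refl X₂) a.2

@[simp]
lemma prod_smul_f (a : Aut X₁ × Aut X₃) : (a • q).f = a.1.inv ≫ q.f :=
  congrArg (a.1.inv ≫ ·) (Category.comp_id q.f)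

@[simp]
lemma prod_smul_g (a : Aut X₁ × Aut X₃) : (a • q).g = q.g ≫ a.2.hom :=
  Category.id_comp _

instance : MulAction (Aut X₁ × Aut X₃) (ShortExactSeq X₁ X₂ X₃) where
  one_smul q := by
    ext
    · exact (prod_smul_f q 1).trans (Category.id_comp _)
    · exact (prod_smul_g q 1).trans (Category.comp_id _)
  mul_smul a b q := by
    ext
    · simp only [prod_smul_f]; exact Category.assoc _ _ _
    · simp only [prod_smul_g]; exact (Category.assoc _ _ _).symm

instance : SMul (Aut X₂) (ShortExactSeq X₁ X₂ X₃) where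
  smul σ q := q.mapIso (Iso.refl X₁) σ (Iso.refl X₃)

@[simp]
lemma smul_f (σ : Aut X₂) : (σ • q).f = q.f ≫ σ.hom :=
  Category.id_comp _

@[simp]
lemma smul_g (σ : Aut X₂) : (σ • q).g = σ.inv ≫ q.g :=
  congrArg (σ.inv ≫ ·) (Category.comp_id q.g)

instance : MulAction (Aut X₂) (ShortExactSeq X₁ X₂ X₃) where
  one_smul q := by
    ext
    · exact (smul_f q 1).trans (Category.comp_id _)
    · exact (smul_g q 1).trans (Category.id_comp _)
  mul_smul σ τ q := by
    ext
    · simp only [smul_f]; exact (Category.assoc _ _ _).symm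
    · simp only [smul_g]; exact Category.assoc _ _ _

lemma stabilizer_prod_eq_bot : stabilizer (Aut X₁ × Aut X₃) q = ⊥ := by
  refine (Subgroup.eq_bot_iff_forall _).2 fun a ha => ?_
  have hf : a.1.inv ≫ q.f = 𝟙 X₁ ≫ q.f := by rw [Category.id_comp, ← prod_smul_f, ha]
  have hg : q.g ≫ a.2.hom = q.g ≫ 𝟙 X₃ := by rw [Category.comp_id, ← prod_smul_g, ha]
  exact Prod.ext (inv_eq_one.mp (Iso.ext ((cancel_mono q.f).mp hf)))
    (Iso.ext ((cancel_epi q.g).mp hg))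

def shear (φ : X₃ ⟶ X₁) : Aut X₂ where
  hom := 𝟙 X₂ + q.g ≫ φ ≫ q.f
  inv := 𝟙 X₂ - q.g ≫ φ ≫ q.f
  hom_inv_id := by simp [Preadditive.comp_sub, Preadditive.add_comp, reassoc_of% q.w]
  inv_hom_id := by simp [Preadditive.comp_add, Preadditive.sub_comp, reassoc_of% q.w]

lemma shear_hom (φ : X₃ ⟶ X₁) : (q.shear φ).hom = 𝟙 X₂ + q.g ≫ φ ≫ q.f := rfl

lemma shear_inv (φ : X₃ ⟶ X₁) : (q.shear φ).inv = 𝟙 X₂ - q.g ≫ φ ≫ q.f := rfl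

lemma shear_smul (φ : X₃ ⟶ X₁) : q.shear φ • q = q := by
  ext
  · simp [shear_hom, Preadditive.comp_add, reassoc_of% q.w]
  · simp [shear_inv, Preadditive.sub_comp, q.w]

lemma shear_injective : Function.Injective q.shear := fun φ ψ h => by
  have h' : q.g ≫ φ ≫ q.f = q.g ≫ ψ ≫ q.f := add_left_cancel (congrArg Iso.hom h)
  rwa [cancel_epi, cancel_mono] at h'

lemma exists_shear_eq_of_smul_eq {σ : Aut X₂} (hσ : σ • q = q) : ∃ φ, q.shear φ = σ := by
  have hf : q.f ≫ σ.hom = q.f := by rw [← smul_f, hσ]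
  have hg : σ.hom ≫ q.g = q.g := calc
    σ.hom ≫ q.g = σ.hom ≫ σ.inv ≫ q.g := by rw [← smul_g, hσ]
    _ = q.g := σ.hom_inv_id_assoc q.g
  have hker : (σ.hom - 𝟙 X₂) ≫ q.g = 0 := by simp [Preadditive.sub_comp, hg]
  obtain ⟨ψ, hψ⟩ : ∃ ψ, ψ ≫ q.f = σ.hom - 𝟙 X₂ := ⟨_, q.shortExact.exact.lift_f _ hker⟩
  have hcoker : q.f ≫ ψ = 0 := by
    rw [← cancel_mono q.f, Category.assoc, hψ, Preadditive.comp_sub, hf]; simp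
  refine ⟨q.shortExact.exact.desc ψ hcoker, Iso.ext ?_⟩
  rw [shear_hom, q.shortExact.exact.g_desc_assoc, hψ, add_sub_cancel]

lemma card_stabilizer : Nat.card (stabilizer (Aut X₂) q) = Nat.card (X₃ ⟶ X₁) := by
  refine (Nat.card_congr (Equiv.ofBijective (fun φ => ⟨q.shear φ, q.shear_smul φ⟩) ⟨?_, ?_⟩)).symm
  · exact fun φ ψ h => q.shear_injective (congrArg Subtype.val h)
  · rintro ⟨σ, hσ⟩
    obtain ⟨φ, rfl⟩ := q.exists_shear_eq_of_smul_eq hσ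
    exact ⟨φ, rfl⟩

noncomputable def cokernelIso : cokernel q.f ≅ X₃ :=
  (cokernelIsCokernel q.f).coconePointUniqueUpToIso q.shortExact.gIsCokernel

noncomputable def toSubobject :
    {S : Subobject X₂ // Nonempty ((S : A) ≅ X₁) ∧ Nonempty (cokernel S.arrow ≅ X₃)} :=
  ⟨Subobject.mk q.f, ⟨Subobject.underlyingIso q.f⟩,
    ⟨cokernelIsoOfEq (Subobject.underlyingIso_hom_comp_eq_mk q.f).symm ≪≫
      cokernelEpiComp _ _ ≪≫ q.cokernelIso⟩⟩

lemma exists_iso_comp_g_eq {X₁' X₃' : A} (q' : ShortExactSeq X₁' X₂ X₃')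
    (h : q.f ≫ q'.g = 0) (h' : q'.f ≫ q.g = 0) : ∃ c : X₃ ≅ X₃', q.g ≫ c.hom = q'.g := by
  have hc := q.shortExact.exact.g_desc q'.g h
  have hc' := q'.shortExact.exact.g_desc q.g h'
  refine ⟨⟨q.shortExact.exact.desc q'.g h, q'.shortExact.exact.desc q.g h', ?_, ?_⟩, hc⟩
  · rw [← cancel_epi q.g, reassoc_of% hc, hc', Category.comp_id]
  · rw [← cancel_epi q'.g, reassoc_of% hc', hc, Category.comp_id]

lemma mk_f_eq_mk_f_iff (q' : ShortExactSeq X₁ X₂ X₃) :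
    Subobject.mk q.f = Subobject.mk q'.f ↔ ∃ a : Aut X₁ × Aut X₃, a • q = q' := by
  constructor
  · intro h
    let b := Subobject.isoOfMkEqMk q.f q'.f h
    have hb : b.hom ≫ q'.f = q.f := Subobject.ofMkLEMk_comp h.le
    have hb' : b.inv ≫ q.f = q'.f := by rw [← hb, b.inv_hom_id_assoc]
    obtain ⟨c, hc⟩ := q.exists_iso_comp_g_eq q' (by rw [← hb, Category.assoc, q'.w, comp_zero])
      (by rw [← hb', Category.assoc, q.w, comp_zero])
    exact ⟨(b, c), ShortExactSeq.ext (by rw [prod_smul_f, hb']) (by rw [prod_smul_g, hc])⟩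
  · rintro ⟨a, rfl⟩
    exact Subobject.mk_eq_mk_of_comm _ _ a.1 (by rw [prod_smul_f, a.1.hom_inv_id_assoc])

lemma toSubobject_surjective :
    Function.Surjective (toSubobject : ShortExactSeq X₁ X₂ X₃ → _) := by
  rintro ⟨S, ⟨u⟩, ⟨v⟩⟩
  refine ⟨(ofCokernel S.arrow).mapIso u (Iso.refl X₂) v, Subtype.ext ?_⟩
  exact (Subobject.mk_eq_mk_of_comm _ S.arrow u.symm (by simp)).trans S.mk_arrow

end ShortExactSeq

lemma extnEquiv_equivalence {M L : A} : Equivalence (ExtnEquiv (M := M) (L := L)) where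
  refl _ := ⟨Iso.refl _, Category.comp_id _, Category.id_comp _⟩
  symm := fun ⟨φ, hι, hπ⟩ => ⟨φ.symm, by rw [← hι, Iso.symm_hom, Category.assoc, φ.hom_inv_id,
    Category.comp_id], by rw [← hπ, Iso.symm_hom, φ.inv_hom_id_assoc]⟩
  trans := fun ⟨φ, hι, hπ⟩ ⟨ψ, hι', hπ'⟩ => ⟨φ ≪≫ ψ, by rw [Iso.trans_hom, reassoc_of% hι, hι'],
    by rw [Iso.trans_hom, Category.assoc, hπ', hπ]⟩

def Extn.toShortExactSeq {M L : A} (e : Extn M L) : ShortExactSeq M e.E L :=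
  ⟨e.ι, e.π, e.w, e.shortExact⟩

namespace ShortExactSeq

variable {X₁ X₂ X₃ : A} (q : ShortExactSeq X₁ X₂ X₃)

def toExtn : Extn X₁ X₃ := ⟨X₂, q.f, q.g, q.w, q.shortExact⟩

lemma extnEquiv_toExtn_iff (q' : ShortExactSeq X₁ X₂ X₃) :
    ExtnEquiv q.toExtn q'.toExtn ↔ ∃ σ : Aut X₂, σ • q = q' := by
  constructor
  · rintro ⟨φ, hf, hg⟩
    exact ⟨φ, ShortExactSeq.ext ((smul_f q φ).trans hf) ((smul_g q φ).trans
      ((congrArg (φ.inv ≫ ·) hg).symm.trans (φ.inv_hom_id_assoc q'.g)))⟩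
  · rintro ⟨σ, rfl⟩
    exact ⟨σ, (smul_f q σ).symm,
      (congrArg (σ.hom ≫ ·) (smul_g q σ)).trans (σ.hom_inv_id_assoc q.g)⟩

noncomputable def toExtnClass :
    Quot (fun e e' : {e : Extn X₁ X₃ // Nonempty (e.E ≅ X₂)} => ExtnEquiv e.1 e'.1) :=
  Quot.mk _ ⟨q.toExtn, ⟨Iso.refl X₂⟩⟩

lemma toExtnClass_eq_iff (q' : ShortExactSeq X₁ X₂ X₃) :
    q.toExtnClass = q'.toExtnClass ↔ ∃ σ : Aut X₂, σ • q = q' :=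
  ((extnEquiv_equivalence.comap Subtype.val).quot_mk_eq_iff _ _).trans (q.extnEquiv_toExtn_iff q')

lemma toExtnClass_surjective :
    Function.Surjective (toExtnClass : ShortExactSeq X₁ X₂ X₃ → _) := by
  refine Quot.ind fun ⟨e, ⟨ψ⟩⟩ => ⟨e.toShortExactSeq.mapIso (Iso.refl X₁) ψ (Iso.refl X₃), ?_⟩
  exact Quot.sound ⟨ψ.symm, by simp [toExtn, Extn.toShortExactSeq],
    by simp [toExtn, Extn.toShortExactSeq]⟩

variable [∀ X Y : A, Finite (X ⟶ Y)]

lemma card_eq_hallNum_mul :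
    Nat.card (ShortExactSeq X₁ X₂ X₃) = hallNum X₂ X₃ X₁ * (autCard X₁ * autCard X₃) := by
  have h := card_mul_eq_card_orbits_mul_card (G := Aut X₁ × Aut X₃)
    (S := ShortExactSeq X₁ X₂ X₃) (n := 1) fun q => by
      rw [stabilizer_prod_eq_bot, Subgroup.card_bot]
  rwa [mul_one, card_orbits_eq_of_surjective toSubobject toSubobject_surjective fun q q' =>
    Subtype.ext_iff.trans (mk_f_eq_mk_f_iff q q'), Nat.card_prod] at h

lemma card_mul_homCard_eq :
    Nat.card (ShortExactSeq X₁ X₂ X₃) * homCard X₃ X₁ = extCardWith X₃ X₁ X₂ * autCard X₂ := by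
  have h := card_mul_eq_card_orbits_mul_card (G := Aut X₂)
    (S := ShortExactSeq X₁ X₂ X₃) card_stabilizer
  rwa [card_orbits_eq_of_surjective toExtnClass toExtnClass_surjective toExtnClass_eq_iff] at h

end ShortExactSeq

theorem stmt15 (k : Type) [Field k] [Finite k] [CategoryTheory.Linear k A]
    [∀ X Y : A, Finite (X ⟶ Y)]
    (hfinext : ∀ X Y : A, Finite (Quot (ExtnEquiv (M := Y) (L := X))))
    [HasExt.{w} A]
    (hered : ∀ (X Y : A) (n : ℕ), 2 ≤ n → Subsingleton (Abelian.Ext X Y n))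
    (X Y Z : A) :
    (hallNum Z X Y : ℚ) =
      ((extCardWith X Y Z : ℚ) / (homCard X Y : ℚ)) *
        ((autCard Z : ℚ) / ((autCard X : ℚ) * (autCard Y : ℚ))) := by
  have hcount : hallNum Z X Y * (autCard Y * autCard X) * homCard X Y =
      extCardWith X Y Z * autCard Z := by
    rw [← ShortExactSeq.card_eq_hallNum_mul]
    exact ShortExactSeq.card_mul_homCard_eq
  qify at hcount
  have hpos : (homCard X Y * (autCard X * autCard Y) : ℚ) ≠ 0 := by
    have : Nonempty (X ⟶ Y) := ⟨0⟩
    simp only [homCard, autCard, ne_eq, mul_eq_zero, Nat.cast_eq_zero, not_or]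
    exact ⟨Nat.card_pos.ne', Nat.card_pos.ne', Nat.card_pos.ne'⟩
  rw [div_mul_div_comm, eq_div_iff hpos]
  linear_combination hcount
end
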